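/- If λ satisfies the characteristic quadratic (u²−c²)λ² − 2ρc²vλ − ρ²c²(u²+v²) = 0, then the row vector ℓ = (λ/ρ + v, −u, −λu) is a left eigenvector: ℓ·(A₂ − λA₁) = 0, where A₁ = [[ρu,0,1],[0,ρu,0],[1,0,u/(ρc²)]] and A₂ = [[0,0,−ρv],[0,0,ρu],[−ρv,ρu,0]]. -/

import Mathlib

open Matrix

theorem Matrix.vecMul_fin_three {α : Type*} [NonUnitalNonAssocSemiring α]
    (a₀ a₁ a₂ m₀₀ m₀₁ m₀₂ m₁₀ m₁₁ m₁₂ m₂₀ m₂₁ m₂₂ : α) :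
    ![a₀, a₁, a₂] ᵥ* !![m₀₀, m₀₁, m₀₂; m₁₀, m₁₁, m₁₂; m₂₀, m₂₁, m₂₂] =
      ![a₀ * m₀₀ + a₁ * m₁₀ + a₂ * m₂₀, a₀ * m₀₁ + a₁ * m₁₁ + a₂ * m₂₁,
        a₀ * m₀₂ + a₁ * m₁₂ + a₂ * m₂₂] := by
  ext j
  fin_cases j <;> simp [vecMul, add_assoc]

/-- If `l` satisfies the characteristic quadratic, then `ℓ = (l/ρ + v, −u, −l u)` is a left
eigenvector: `ℓ·(A₂ − l A₁) = 0`. -/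
theorem left_eigenvector (u v ρ c l : ℝ) (hρ : ρ ≠ 0) (hc : c ≠ 0)
    (hquad : (u ^ 2 - c ^ 2) * l ^ 2 - 2 * ρ * c ^ 2 * v * l
        - ρ ^ 2 * c ^ 2 * (u ^ 2 + v ^ 2) = 0) :
    Matrix.vecMul ![l / ρ + v, -u, -l * u]
      ((!![0, 0, -ρ * v; 0, 0, ρ * u; -ρ * v, ρ * u, 0] : Matrix (Fin 3) (Fin 3) ℝ)
        - l • (!![ρ * u, 0, 1; 0, ρ * u, 0; 1, 0, u / (ρ * c ^ 2)] : Matrix (Fin 3) (Fin 3) ℝ))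
      = 0 := by
  rw [vecMul_sub, vecMul_smul, sub_eq_zero, vecMul_fin_three, vecMul_fin_three, smul_vec3]
  refine vec3_eq ?_ ?_ ?_ <;> rw [smul_eq_mul]
  · field_simp
    ring
  · ring
  · -- cleared of the denominator `ρ c²`, this entry is the characteristic quadratic
    field_simp
    linear_combination hquad
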